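/- Jacobi's identity: f_1^3 = ∑_{j≥0} (−1)^j (2j+1) q^{j(j+1)/2} as formal power series. -/

import Mathlib

/-!
Work in `ℤ[q, q⁻¹][x]`. Induction on `n` with the two `q`-Pascal rules gives the finite form of
Jacobi's triple product,
`(1 + x) ∏_{i=1}^n (q^i + x)(1 + q^i x) = ∑_k q^{C(k-n, 2)} [2n+1, k]_q x^k`.
Differentiating at `x = -1` leaves only the term where `1 + x` is differentiated; pairing
`k = n - j` with its mirror `k = n + 1 + j` on the right yields
`(∏_{i=1}^n (1 - q^i))^2 = ∑_{j ≤ n} (-1)^j (2j+1) q^{j(j+1)/2} [2n+1, n-j]_q`.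
One more factor `∏_{i=1}^n (1 - q^i)` turns `[2n+1, n-j]_q` into `∏_{i=n+j+2}^{2n+1} (1 - q^i)`,
so the `j`-th term of `(∏_{i=1}^n (1 - q^i))^3` is `(-1)^j (2j+1) q^{j(j+1)/2}` modulo
`q^{n+1}`, and taking `n = N` reads off the coefficient of `q^N`.
-/

open Finset
open scoped LaurentPolynomial
open LaurentPolynomial (T T_add T_pow)

/-- `f m` is the formal power series `∏_{k ≥ 1} (1 - q^{m k})` (for `m ≥ 1`),
realized via the fact that its `n`-th coefficient equals that of the
finite product `∏_{k=1}^{n} (1 - q^{m k})`. -/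
noncomputable def f (m : ℕ) : PowerSeries ℤ :=
  PowerSeries.mk fun n =>
    PowerSeries.coeff (R := ℤ) n (∏ k ∈ Finset.Icc 1 n, (1 - (PowerSeries.X : PowerSeries ℤ) ^ (m * k)))

namespace Finset

theorem sum_range_two_mul_add_two {M : Type*} [AddCommMonoid M] (f : ℕ → M) (n : ℕ) :
    ∑ k ∈ range (2 * n + 2), f k = ∑ j ∈ range (n + 1), (f (n - j) + f (n + 1 + j)) := by
  rw [show 2 * n + 2 = (n + 1) + (n + 1) by ring, sum_range_add, sum_add_distrib,
    ← sum_range_reflect f (n + 1)]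
  simp only [add_tsub_cancel_right]

theorem prod_Icc_one_mul_prod_Icc_succ {M : Type*} [CommMonoid M] (f : ℕ → M) {b c : ℕ}
    (hbc : b ≤ c) :
    (∏ i ∈ Icc 1 b, f i) * ∏ i ∈ Icc (b + 1) c, f i = ∏ i ∈ Icc 1 c, f i := by
  rw [Icc_add_one_left_eq_Ioc b c, show (1 : ℕ) = 0 + 1 from rfl, Icc_add_one_left_eq_Ioc,
    Icc_add_one_left_eq_Ioc, prod_Ioc_consecutive _ (Nat.zero_le b) hbc]

end Finset

theorem dvd_mul_sub_one {R : Type*} [CommRing R] {a x y : R} (hx : a ∣ x - 1) (hy : a ∣ y - 1) :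
    a ∣ x * y - 1 := by
  rw [show x * y - 1 = (x - 1) * y + (y - 1) by ring]
  exact dvd_add (hx.mul_right y) hy

theorem dvd_prod_sub_one {R ι : Type*} [CommRing R] {a : R} {s : Finset ι} {g : ι → R}
    (h : ∀ i ∈ s, a ∣ g i - 1) : a ∣ ∏ i ∈ s, g i - 1 :=
  prod_induction g (fun x => a ∣ x - 1) (fun _ _ => dvd_mul_sub_one) (by simp) h

theorem two_mul_choose_two (t : ℤ) : 2 * Ring.choose t 2 = t * (t - 1) := by
  have h := Ring.descPochhammer_eq_factorial_smul_choose t 2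
  simp only [descPochhammer_succ_right, descPochhammer_zero, Nat.cast_zero, sub_zero, one_mul,
    Nat.cast_one, Polynomial.smeval_mul, Polynomial.smeval_X, pow_one, Polynomial.smeval_sub,
    Polynomial.smeval_one, pow_zero, Int.nsmul_eq_mul, mul_one, Nat.factorial_two,
    Nat.cast_ofNat] at h
  exact h.symm

theorem choose_neg_natCast_two (j : ℕ) : Ring.choose (-(j : ℤ)) 2 = ↑(j * (j + 1) / 2) := by
  have h := two_mul_choose_two (-(j : ℤ))
  rw [Int.natCast_div]
  push_cast
  exact Int.eq_ediv_of_mul_eq_right two_ne_zero (by linarith)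

namespace Polynomial

theorem coeff_mul_X_pow_of_coeff_eq {S : Type*} [Semiring S] {p : S[X]} {c : ℤ → S}
    (hp : ∀ i : ℕ, p.coeff i = c i) (hc : ∀ k < 0, c k = 0) (j m : ℕ) :
    (p * X ^ j).coeff m = c (m - j) := by
  rw [coeff_mul_X_pow']
  split_ifs with h
  · rw [hp, Nat.cast_sub h]
  · rw [hc _ (by omega)]

end Polynomial

namespace PowerSeries

variable {R : Type*} [CommRing R]

theorem X_pow_dvd_prod_one_sub_X_pow_sub_one {d : ℕ} {s : Finset ℕ} {e : ℕ → ℕ}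
    (h : ∀ k ∈ s, d ≤ e k) : (X : R⟦X⟧) ^ d ∣ ∏ k ∈ s, (1 - X ^ e k) - 1 :=
  dvd_prod_sub_one fun k hk => by
    rw [sub_sub_cancel_left, dvd_neg]; exact pow_dvd_pow X (h k hk)

theorem coeff_eq_of_X_pow_dvd_sub {φ ψ : R⟦X⟧} {n d : ℕ} (h : X ^ d ∣ φ - ψ)
    (hn : n < d) : coeff n φ = coeff n ψ := by
  rw [← sub_eq_zero, ← map_sub]; exact X_pow_dvd_iff.mp h n hn

theorem coeff_X_pow_mul_of_X_pow_dvd_sub_one {φ : R⟦X⟧} {n d e : ℕ} (h : X ^ d ∣ φ - 1)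
    (hn : n < e + d) : coeff n (X ^ e * φ) = if n = e then 1 else 0 := by
  rw [coeff_X_pow_mul']
  split_ifs with he hne hne
  · rw [coeff_eq_of_X_pow_dvd_sub h (by omega), hne, Nat.sub_self, coeff_zero_eq_constantCoeff,
      map_one]
  · rw [coeff_eq_of_X_pow_dvd_sub h (by omega), coeff_one, if_neg (by omega)]
  · omega
  · rfl

end PowerSeries

section GaussianBinomial

variable (R : Type*) [CommRing R]

/-- The Gaussian binomial `[m, k]_q`, indexed by `k : ℤ` and zero outside `0 ≤ k ≤ m`, so that
both `q`-Pascal rules hold for every `k`. -/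
noncomputable def gaussBinom : ℕ → ℤ → R[T;T⁻¹]
  | 0, k => if k = 0 then 1 else 0
  | m + 1, k => gaussBinom m k + T (m + 1 - k) * gaussBinom m (k - 1)

variable {R}

theorem gaussBinom_succ (m : ℕ) (k : ℤ) :
    gaussBinom R (m + 1) k = gaussBinom R m k + T (m + 1 - k) * gaussBinom R m (k - 1) :=
  rfl

theorem gaussBinom_of_neg (m : ℕ) {k : ℤ} (hk : k < 0) : gaussBinom R m k = 0 := by
  induction m generalizing k with
  | zero => simp [gaussBinom, hk.ne]
  | succ m ih => rw [gaussBinom_succ, ih hk, ih (by omega), mul_zero, add_zero]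

theorem gaussBinom_of_lt {m : ℕ} {k : ℤ} (hk : m < k) : gaussBinom R m k = 0 := by
  induction m generalizing k with
  | zero => simp only [gaussBinom]; rw [if_neg (by omega)]
  | succ m ih => rw [gaussBinom_succ, ih (by omega), ih (by omega), mul_zero, add_zero]

theorem gaussBinom_zero_right (m : ℕ) : gaussBinom R m 0 = 1 := by
  induction m with
  | zero => simp [gaussBinom]
  | succ m ih => rw [gaussBinom_succ, ih, gaussBinom_of_neg m (by omega), mul_zero, add_zero]

theorem gaussBinom_succ' (m : ℕ) (k : ℤ) :
    gaussBinom R (m + 1) k = T k * gaussBinom R m k + gaussBinom R m (k - 1) := by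
  induction m generalizing k with
  | zero =>
    rw [gaussBinom_succ]
    simp only [gaussBinom]
    rcases eq_or_ne k 0 with rfl | h0
    · simp
    rcases eq_or_ne k 1 with rfl | h1
    · simp
    · simp [h0, sub_eq_zero, h1]
  | succ m ih =>
    have hT : (T (m + 1 + 1 - k) * T (k - 1) : R[T;T⁻¹]) = T k * T (m + 1 - k) := by
      rw [← T_add, ← T_add]; ring_nf
    have hA := gaussBinom_succ (R := R) m k
    have hA' := gaussBinom_succ (R := R) m (k - 1)
    rw [show (m : ℤ) + 1 - (k - 1) = m + 1 + 1 - k by ring] at hA'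
    rw [gaussBinom_succ (m + 1)]
    push_cast
    linear_combination ih k + T (m + 1 + 1 - k) * ih (k - 1) - T k * hA - hA' +
      gaussBinom R m (k - 1) * hT

theorem gaussBinom_symm (m : ℕ) (k : ℤ) : gaussBinom R m (m - k) = gaussBinom R m k := by
  induction m generalizing k with
  | zero => simp only [gaussBinom]; split_ifs <;> first | rfl | (exfalso; omega)
  | succ m ih =>
    rw [gaussBinom_succ, gaussBinom_succ', ← ih k, ← ih (k - 1)]
    push_cast
    ring_nf

theorem one_sub_T_mul_gaussBinom_succ (m : ℕ) (k : ℤ) :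
    (1 - T (k + 1)) * gaussBinom R (m + 1) (k + 1) = (1 - T (m + 1)) * gaussBinom R m k := by
  have hT : (T (k + 1) * T (m + 1 - (k + 1)) : R[T;T⁻¹]) = T (m + 1) := by
    rw [← T_add]; ring_nf
  have hA := gaussBinom_succ (R := R) m (k + 1)
  have hB := gaussBinom_succ' (R := R) m (k + 1)
  rw [add_sub_cancel_right] at hA hB
  linear_combination hB - T (k + 1) * hA - gaussBinom R m k * hT

theorem prod_one_sub_T_mul_gaussBinom (j k : ℕ) :
    (∏ i ∈ Icc 1 j, (1 - T i : R[T;T⁻¹])) * gaussBinom R (j + k) j =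
      ∏ i ∈ Icc (k + 1) (k + j), (1 - T i : R[T;T⁻¹]) := by
  induction j with
  | zero => simp [gaussBinom_zero_right]
  | succ j ih =>
    rw [prod_Icc_succ_top (by omega), ← add_assoc k, prod_Icc_succ_top (by omega), ← ih,
      show j + 1 + k = j + k + 1 by omega]
    push_cast
    rw [mul_assoc, one_sub_T_mul_gaussBinom_succ]
    push_cast
    rw [add_comm (j : ℤ) k]
    ring

theorem gaussBinom_add_two (m : ℕ) (k : ℤ) :
    gaussBinom R (m + 2) k = T k * gaussBinom R m k + (1 + T (m + 1)) * gaussBinom R m (k - 1) +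
      T (m + 2 - k) * gaussBinom R m (k - 2) := by
  have hT : (T k * T (m + 1 - k) : R[T;T⁻¹]) = T (m + 1) := by rw [← T_add]; ring_nf
  rw [gaussBinom_succ', gaussBinom_succ, gaussBinom_succ m (k - 1),
    show (m : ℤ) + 1 - (k - 1) = m + 2 - k by ring, sub_sub, show (1 : ℤ) + 1 = 2 by norm_num]
  linear_combination gaussBinom R m (k - 1) * hT

end GaussianBinomial

section TripleProduct

open Polynomial

variable (R : Type*) [CommRing R]

noncomputable def jacobiCoeff (n : ℕ) (k : ℤ) : R[T;T⁻¹] :=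
  T (Ring.choose (k - n) 2) * gaussBinom R (2 * n + 1) k

noncomputable def tripleProductPoly (n : ℕ) : R[T;T⁻¹][X] :=
  (1 + X) * ∏ i ∈ Icc 1 n, (C (T i : R[T;T⁻¹]) + X) * (1 + C (T i) * X)

variable {R}

theorem jacobiCoeff_of_neg (n : ℕ) {k : ℤ} (hk : k < 0) : jacobiCoeff R n k = 0 := by
  rw [jacobiCoeff, gaussBinom_of_neg _ hk, mul_zero]

theorem jacobiCoeff_of_lt {n : ℕ} {k : ℤ} (hk : 2 * n + 1 < k) : jacobiCoeff R n k = 0 := by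
  rw [jacobiCoeff, gaussBinom_of_lt (by push_cast; omega), mul_zero]

theorem jacobiCoeff_succ (n : ℕ) (k : ℤ) :
    jacobiCoeff R (n + 1) k = T (n + 1) * jacobiCoeff R n k +
      (1 + T (2 * n + 2)) * jacobiCoeff R n (k - 1) + T (n + 1) * jacobiCoeff R n (k - 2) := by
  have h₀ := two_mul_choose_two (k - n)
  have h₁ := two_mul_choose_two (k - (n + 1))
  have h₂ := two_mul_choose_two (k - 2 - n)
  have e₀ : (T (Ring.choose (k - (n + 1)) 2) * T k : R[T;T⁻¹]) =
      T (n + 1) * T (Ring.choose (k - n) 2) := by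
    rw [← T_add, ← T_add]; congr 1; linarith
  have e₂ : (T (Ring.choose (k - (n + 1)) 2) * T (2 * n + 1 + 2 - k) : R[T;T⁻¹]) =
      T (n + 1) * T (Ring.choose (k - 2 - n) 2) := by
    rw [← T_add, ← T_add]; congr 1; linarith
  simp only [jacobiCoeff]
  rw [show 2 * (n + 1) + 1 = 2 * n + 1 + 2 by ring, gaussBinom_add_two]
  push_cast
  rw [show k - 1 - n = k - (n + 1) by ring, show (2 * n + 1 + 1 : ℤ) = 2 * n + 2 by ring]
  linear_combination gaussBinom R (2 * n + 1) k * e₀ + gaussBinom R (2 * n + 1) (k - 2) * e₂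

theorem tripleProductPoly_succ (n : ℕ) :
    tripleProductPoly R (n + 1) = C (T (n + 1)) * tripleProductPoly R n +
      C (1 + T (2 * n + 2)) * (tripleProductPoly R n * X ^ 1) +
      C (T (n + 1)) * (tripleProductPoly R n * X ^ 2) := by
  have hT : (C (T (n + 1)) * C (T (n + 1)) : R[T;T⁻¹][X]) = C (T (2 * n + 2)) := by
    rw [← C_mul, ← T_add]; ring_nf
  simp only [tripleProductPoly]
  rw [prod_Icc_succ_top (by omega), C_add, C_1]
  push_cast
  linear_combination
    (1 + X) * (∏ i ∈ Icc 1 n, (C (T i : R[T;T⁻¹]) + X) * (1 + C (T i) * X)) * X * hT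

theorem coeff_tripleProductPoly (n m : ℕ) :
    (tripleProductPoly R n).coeff m = jacobiCoeff R n m := by
  induction n generalizing m with
  | zero =>
    have h₀ : Ring.choose (0 : ℤ) 2 = 0 := by have := two_mul_choose_two 0; omega
    have h₁ : Ring.choose (1 : ℤ) 2 = 0 := by have := two_mul_choose_two 1; omega
    rcases m with _ | _ | m
    · simp [tripleProductPoly, jacobiCoeff, gaussBinom, h₀]
    · simp [tripleProductPoly, jacobiCoeff, gaussBinom, h₁, coeff_one]
    · simp [tripleProductPoly, jacobiCoeff, gaussBinom, coeff_one, coeff_X,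
        show (m : ℤ) + 1 + 1 ≠ 0 by omega, show (m : ℤ) + 1 ≠ 0 by omega]
  | succ n ih =>
    have hc : ∀ k < 0, jacobiCoeff R n k = 0 := fun k hk => jacobiCoeff_of_neg n hk
    rw [tripleProductPoly_succ, coeff_add, coeff_add, coeff_C_mul, coeff_C_mul, coeff_C_mul,
      coeff_mul_X_pow_of_coeff_eq ih hc, coeff_mul_X_pow_of_coeff_eq ih hc, ih, jacobiCoeff_succ]
    push_cast
    ring

theorem jacobiCoeff_reflect (n : ℕ) (k : ℤ) :
    jacobiCoeff R n (2 * n + 1 - k) = jacobiCoeff R n k := by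
  have h₀ := two_mul_choose_two (k - n)
  have h₁ := two_mul_choose_two (2 * n + 1 - k - n)
  have h := gaussBinom_symm (R := R) (2 * n + 1) k
  push_cast at h
  rw [jacobiCoeff, jacobiCoeff, h, show Ring.choose (2 * n + 1 - k - n) 2 = Ring.choose (k - n) 2 by
    linarith]

theorem tripleProductPoly_eq_sum (n : ℕ) :
    tripleProductPoly R n = ∑ k ∈ range (2 * n + 2), C (jacobiCoeff R n k) * X ^ k := by
  have hdeg : (tripleProductPoly R n).natDegree < 2 * n + 2 := by
    rw [Nat.lt_succ_iff, natDegree_le_iff_coeff_eq_zero]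
    intro m hm
    rw [coeff_tripleProductPoly, jacobiCoeff_of_lt (by omega)]
  conv_lhs => rw [as_sum_range' _ _ hdeg]
  simp only [coeff_tripleProductPoly, C_mul_X_pow_eq_monomial]

theorem eval_neg_one_derivative_tripleProductPoly (n : ℕ) :
    (derivative (tripleProductPoly R n)).eval (-1) =
      (-1) ^ n * (∏ i ∈ Icc 1 n, (1 - T i)) ^ 2 := by
  simp only [tripleProductPoly, derivative_mul, derivative_add, derivative_one, derivative_X,
    zero_add, one_mul, eval_add, eval_prod, eval_mul, eval_C, eval_X, eval_one, mul_neg, mul_one,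
    add_neg_cancel, zero_mul, add_zero]
  rw [prod_congr rfl fun (i : ℕ) _ => show (T (i : ℤ) + -1) * (1 + -T (i : ℤ)) =
      -1 * (1 - T (i : ℤ) : R[T;T⁻¹]) ^ 2 by ring,
    prod_mul_distrib, prod_const, prod_pow, Nat.card_Icc, Nat.add_sub_cancel]

theorem sum_range_neg_one_pow_mul_jacobiCoeff (n : ℕ) :
    ∑ k ∈ range (2 * n + 2), (-1) ^ k * (k : R[T;T⁻¹]) * jacobiCoeff R n k =
      -((-1) ^ n * (∏ i ∈ Icc 1 n, (1 - T i)) ^ 2) := by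
  have h := congrArg (fun p => (derivative p).eval (-1)) (tripleProductPoly_eq_sum (R := R) n)
  simp only [eval_neg_one_derivative_tripleProductPoly, derivative_sum, derivative_C_mul_X_pow,
    eval_finsetSum, eval_mul, eval_C, eval_pow, eval_X] at h
  rw [h, ← sum_neg_distrib]
  refine sum_congr rfl fun k _ => ?_
  rcases k with _ | k
  · simp
  · rw [add_tsub_cancel_right, pow_succ]
    ring

theorem sq_prod_one_sub_T (n : ℕ) :
    (∏ i ∈ Icc 1 n, (1 - T i : R[T;T⁻¹])) ^ 2 =
      ∑ j ∈ range (n + 1), (-1) ^ j * (2 * j + 1) * jacobiCoeff R n (n - j) := by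
  have hsq (k : ℕ) : ((-1 : R[T;T⁻¹]) ^ k) ^ 2 = 1 := by
    rw [← pow_mul, pow_mul', neg_one_sq, one_pow]
  calc (∏ i ∈ Icc 1 n, (1 - T i : R[T;T⁻¹])) ^ 2
      = -(-1) ^ n * -((-1) ^ n * (∏ i ∈ Icc 1 n, (1 - T i : R[T;T⁻¹])) ^ 2) := by
        linear_combination -(∏ i ∈ Icc 1 n, (1 - T i : R[T;T⁻¹])) ^ 2 * hsq n
    _ = _ := by
      rw [← sum_range_neg_one_pow_mul_jacobiCoeff, sum_range_two_mul_add_two, mul_sum]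
      refine sum_congr rfl fun j hj => ?_
      obtain ⟨d, rfl⟩ := Nat.exists_eq_add_of_le (mem_range_succ_iff.mp hj)
      have hc : jacobiCoeff R (j + d) ↑(j + d + 1 + j) = jacobiCoeff R (j + d) d := by
        rw [← jacobiCoeff_reflect]; congr 1; push_cast; ring
      rw [hc, add_tsub_cancel_left]
      push_cast
      rw [show (j : ℤ) + d - j = d by ring]
      set c := jacobiCoeff R (j + d) d
      simp only [pow_add, pow_one]
      linear_combination (-c * (-1) ^ j * d + c * ((-1) ^ j) ^ 3 * (2 * j + d + 1)) * hsq d +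
        c * (-1) ^ j * (2 * j + d + 1) * hsq j

theorem pow_three_prod_one_sub_T (n : ℕ) :
    (∏ i ∈ Icc 1 n, (1 - T i : R[T;T⁻¹])) ^ 3 =
      ∑ j ∈ range (n + 1), (-1) ^ j * (2 * (j : R[T;T⁻¹]) + 1) * (T ↑(j * (j + 1) / 2) *
        ((∏ i ∈ Icc (n - j + 1) n, (1 - T i)) *
          ∏ i ∈ Icc (n + j + 2) (2 * n + 1), (1 - T i))) := by
  rw [pow_succ', sq_prod_one_sub_T, mul_sum]
  refine sum_congr rfl fun j hj => ?_
  obtain ⟨d, rfl⟩ := Nat.exists_eq_add_of_le (mem_range_succ_iff.mp hj)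
  have hgb := prod_one_sub_T_mul_gaussBinom (R := R) d (d + 2 * j + 1)
  rw [show d + (d + 2 * j + 1) = 2 * (j + d) + 1 by ring,
    show d + 2 * j + 1 + 1 = j + d + j + 2 by ring,
    show d + 2 * j + 1 + d = 2 * (j + d) + 1 by ring] at hgb
  rw [jacobiCoeff, show ((j + d : ℕ) : ℤ) - j = d by push_cast; ring,
    show (d : ℤ) - ↑(j + d) = -j by push_cast; ring, choose_neg_natCast_two,
    add_tsub_cancel_left, ← prod_Icc_one_mul_prod_Icc_succ _ (show d ≤ j + d by omega), ← hgb]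
  ring

end TripleProduct

namespace Polynomial

theorem pow_three_prod_one_sub_X_pow {R : Type*} [CommRing R] (n : ℕ) :
    (∏ i ∈ Icc 1 n, (1 - X ^ i : R[X])) ^ 3 =
      ∑ j ∈ range (n + 1), (-1) ^ j * (2 * (j : R[X]) + 1) * (X ^ (j * (j + 1) / 2) *
        ((∏ i ∈ Icc (n - j + 1) n, (1 - X ^ i)) *
          ∏ i ∈ Icc (n + j + 2) (2 * n + 1), (1 - X ^ i))) := by
  apply toLaurent_injective
  simp only [map_pow, map_prod, map_sum, map_mul, map_sub, map_add, map_one, map_neg, map_natCast,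
    map_ofNat, toLaurent_X, T_pow, mul_one]
  exact pow_three_prod_one_sub_T n

end Polynomial

namespace PowerSeries

theorem pow_three_prod_one_sub_X_pow {R : Type*} [CommRing R] (n : ℕ) :
    (∏ i ∈ Icc 1 n, (1 - X ^ i : R⟦X⟧)) ^ 3 =
      ∑ j ∈ range (n + 1), (-1) ^ j * (2 * (j : R⟦X⟧) + 1) * (X ^ (j * (j + 1) / 2) *
        ((∏ i ∈ Icc (n - j + 1) n, (1 - X ^ i)) *
          ∏ i ∈ Icc (n + j + 2) (2 * n + 1), (1 - X ^ i))) := by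
  simpa only [map_pow, map_prod, map_sum, map_mul, map_sub, map_add, map_one, map_neg, map_natCast,
    map_ofNat, Polynomial.coeToPowerSeries.ringHom_apply, Polynomial.coe_X] using
    congrArg Polynomial.coeToPowerSeries.ringHom
      (Polynomial.pow_three_prod_one_sub_X_pow (R := R) n)

end PowerSeries

open PowerSeries

theorem X_pow_succ_dvd_f_sub_prod {m : ℕ} (hm : 0 < m) (N : ℕ) :
    (X : ℤ⟦X⟧) ^ (N + 1) ∣ f m - ∏ k ∈ Icc 1 N, (1 - X ^ (m * k)) := by
  refine X_pow_dvd_iff.mpr fun n hn => ?_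
  rw [map_sub, f, coeff_mk, sub_eq_zero]
  refine coeff_eq_of_X_pow_dvd_sub (d := n + 1) ?_ (lt_add_one n)
  rw [← prod_Icc_one_mul_prod_Icc_succ _ (show n ≤ N by omega), dvd_sub_comm, ← mul_sub_one]
  refine (X_pow_dvd_prod_one_sub_X_pow_sub_one fun k hk => ?_).mul_left _
  have := (mem_Icc.mp hk).1
  nlinarith

theorem coeff_f_pow {m : ℕ} (hm : 0 < m) (N d : ℕ) :
    coeff N (f m ^ d) = coeff N ((∏ k ∈ Icc 1 N, (1 - X ^ (m * k))) ^ d) :=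
  coeff_eq_of_X_pow_dvd_sub ((X_pow_succ_dvd_f_sub_prod hm N).trans (sub_dvd_pow_sub_pow _ _ d))
    (lt_add_one N)

/-- Jacobi's identity: `f_1^3 = ∑_{j ≥ 0} (-1)^j (2j+1) q^{j(j+1)/2}`. -/
theorem jacobi_identity :
    (f 1) ^ 3 =
      PowerSeries.mk (fun n =>
        ∑ j ∈ Finset.range (n + 1),
          if j * (j + 1) / 2 = n then (-1 : ℤ) ^ j * (2 * j + 1) else 0) := by
  ext N
  rw [coeff_mk, coeff_f_pow one_pos]
  simp only [one_mul]
  rw [pow_three_prod_one_sub_X_pow, map_sum]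
  refine sum_congr rfl fun j hj => ?_
  have hjN : j ≤ N := mem_range_succ_iff.mp hj
  have hje : j ≤ j * (j + 1) / 2 := (Nat.le_div_iff_mul_le two_pos).mpr (by cases j <;> nlinarith)
  have hB : (X : ℤ⟦X⟧) ^ (N - j + 1) ∣
      (∏ i ∈ Icc (N - j + 1) N, (1 - X ^ i)) *
        (∏ i ∈ Icc (N + j + 2) (2 * N + 1), (1 - X ^ i)) - 1 :=
    dvd_mul_sub_one (X_pow_dvd_prod_one_sub_X_pow_sub_one fun k hk => (mem_Icc.mp hk).1)
      (X_pow_dvd_prod_one_sub_X_pow_sub_one fun k hk => by have := (mem_Icc.mp hk).1; omega)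
  rw [show (-1) ^ j * (2 * (j : ℤ⟦X⟧) + 1) = C ((-1 : ℤ) ^ j * (2 * j + 1)) by simp,
    coeff_C_mul, coeff_X_pow_mul_of_X_pow_dvd_sub_one hB (by omega), mul_ite, mul_one, mul_zero]
  simp only [eq_comm]
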